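/- In the special case of the proof of the previous proposition: let L be a finite-dimensional complex Leibniz algebra with Levi decomposition L = S ∔ R where S is a simple Lie algebra and I (the ideal of squares) is a simple S-module, and let b ∈ N satisfy [S, b] ⊆ I and [S, b] ≠ 0. Then (R_b)² restricted to S is zero, i.e. [[x,b],b] = 0 for all x ∈ S. -/

import Mathlib

open Finset

variable {F L : Type} [Field F] [AddCommGroup L] [Module F L]

/-- The span of all brackets `[a,b]` with `a ∈ A`, `b ∈ B`. -/
def brSpan (br : L →ₗ[F] L →ₗ[F] L) (A B : Submodule F L) : Submodule F L :=
  Submodule.span F {z | ∃ a ∈ A, ∃ b ∈ B, z = br a b}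

/-- The subspace `I` spanned by all squares `[x,x]`. -/
def sqIdeal (br : L →ₗ[F] L →ₗ[F] L) : Submodule F L :=
  Submodule.span F {z | ∃ x : L, z = br x x}

/-- `K` is a two-sided ideal of the Leibniz algebra. -/
def IsIdeal (br : L →ₗ[F] L →ₗ[F] L) (K : Submodule F L) : Prop :=
  ∀ x ∈ K, ∀ y : L, br x y ∈ K ∧ br y x ∈ K

/-- Lower central series of a subspace `K`. -/
def lcs (br : L →ₗ[F] L →ₗ[F] L) (K : Submodule F L) : ℕ → Submodule F L
  | 0 => K
  | n + 1 => brSpan br (lcs br K n) K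

/-- Derived series of a subspace `K`. -/
def derSer (br : L →ₗ[F] L →ₗ[F] L) (K : Submodule F L) : ℕ → Submodule F L
  | 0 => K
  | n + 1 => brSpan br (derSer br K n) (derSer br K n)

def IsNilpotentSub (br : L →ₗ[F] L →ₗ[F] L) (K : Submodule F L) : Prop :=
  ∃ n, lcs br K n = ⊥

def IsSolvableSub (br : L →ₗ[F] L →ₗ[F] L) (K : Submodule F L) : Prop :=
  ∃ n, derSer br K n = ⊥

/-- `N` is the nilradical: the maximal nilpotent ideal. -/
def IsNilradical (br : L →ₗ[F] L →ₗ[F] L) (N : Submodule F L) : Prop :=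
  IsIdeal br N ∧ IsNilpotentSub br N ∧
    ∀ K : Submodule F L, IsIdeal br K → IsNilpotentSub br K → K ≤ N

/-- `R` is the solvable radical: the maximal solvable ideal. -/
def IsSolvRadical (br : L →ₗ[F] L →ₗ[F] L) (R : Submodule F L) : Prop :=
  IsIdeal br R ∧ IsSolvableSub br R ∧
    ∀ K : Submodule F L, IsIdeal br K → IsSolvableSub br K → K ≤ R

/-- `S` is a Lie subalgebra (closed under the bracket, which is antisymmetric on it). -/
def IsLieSubalg (br : L →ₗ[F] L →ₗ[F] L) (S : Submodule F L) : Prop :=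
  (∀ x ∈ S, ∀ y ∈ S, br x y ∈ S) ∧ ∀ x ∈ S, ∀ y ∈ S, br x y = - br y x

/-- `K` is an ideal of the subalgebra `S`. -/
def IsIdealIn (br : L →ₗ[F] L →ₗ[F] L) (S K : Submodule F L) : Prop :=
  K ≤ S ∧ ∀ x ∈ K, ∀ y ∈ S, br x y ∈ K ∧ br y x ∈ K

/-- `S` is a semisimple Lie subalgebra: a Lie subalgebra with no nonzero solvable ideals. -/
def IsSemisimpleSubalg (br : L →ₗ[F] L →ₗ[F] L) (S : Submodule F L) : Prop :=
  IsLieSubalg br S ∧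
    ∀ K : Submodule F L, IsIdealIn br S K → IsSolvableSub br K → K = ⊥

/-- `L = S ∔ R` is a Levi decomposition: `S` a semisimple Lie subalgebra, `R` the solvable
radical, and `L` the direct (vector-space) sum of `S` and `R`. -/
def IsLeviDecomp (br : L →ₗ[F] L →ₗ[F] L) (S R : Submodule F L) : Prop :=
  IsSemisimpleSubalg br S ∧ IsSolvRadical br R ∧ S ⊓ R = ⊥ ∧ S ⊔ R = ⊤

/-- `θ` restricts to an `S`-module homomorphism from `S` into `Tgt`
(the `S`-module structure being the right action). -/
def IsModHom (br : L →ₗ[F] L →ₗ[F] L) (S Tgt : Submodule F L) (θ : L →ₗ[F] L) : Prop :=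
  (∀ x ∈ S, θ x ∈ Tgt) ∧ ∀ x ∈ S, ∀ y ∈ S, θ (br x y) = br (θ x) y

/-- The Levi subalgebra `S_θ = {x + θ(x) : x ∈ S}`. -/
def Stheta (S : Submodule F L) (θ : L →ₗ[F] L) : Set L :=
  {z | ∃ x ∈ S, z = x + θ x}

/-- The exponential of a nilpotent endomorphism `D` with `D ^ n = 0`, as a finite sum. -/
def expSum (D : Module.End F L) (n : ℕ) : Module.End F L :=
  ∑ k ∈ Finset.range n, ((k.factorial : F)⁻¹) • D ^ k

/-- Inner automorphisms: compositions of maps `exp(R_a)` with `a ∈ N`. -/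
inductive IsInnerAut (br : L →ₗ[F] L →ₗ[F] L) (N : Submodule F L) : Module.End F L → Prop
  | id : IsInnerAut br N 1
  | comp (a : L) (ha : a ∈ N) (n : ℕ) (hn : (br.flip a : Module.End F L) ^ n = 0)
      (φ : Module.End F L) (hφ : IsInnerAut br N φ) :
      IsInnerAut br N (expSum (br.flip a) n * φ)

/-- The Levi subalgebra `S` is unique up to conjugation by an inner automorphism. -/
def LeviUnique (br : L →ₗ[F] L →ₗ[F] L) (S R N : Submodule F L) : Prop :=
  ∀ S₁ : Submodule F L, IsLeviDecomp br S₁ R →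
    ∃ φ : Module.End F L, IsInnerAut br N φ ∧ Submodule.map φ S = S₁

/-- `J` is the maximal `S`-submodule of `I` with `Hom_S(S, I) ≡ Hom_S(S, J)`:
the smallest `S`-submodule of `I` containing the image of every `S`-module
homomorphism from `S` into `I`. -/
def IsJmod (br : L →ₗ[F] L →ₗ[F] L) (S J : Submodule F L) : Prop :=
  J ≤ sqIdeal br ∧ (∀ j ∈ J, ∀ s ∈ S, br j s ∈ J) ∧
  (∀ θ : L →ₗ[F] L, IsModHom br S (sqIdeal br) θ → ∀ x ∈ S, θ x ∈ J) ∧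
  ∀ J' : Submodule F L,
    (J' ≤ sqIdeal br ∧ (∀ j ∈ J', ∀ s ∈ S, br j s ∈ J') ∧
      (∀ θ : L →ₗ[F] L, IsModHom br S (sqIdeal br) θ → ∀ x ∈ S, θ x ∈ J')) → J ≤ J'

/-- Membership in `E = {b ∈ N : [S, b] ⊆ I}`. -/
def memE (br : L →ₗ[F] L →ₗ[F] L) (S N : Submodule F L) (b : L) : Prop :=
  b ∈ N ∧ ∀ s ∈ S, br s b ∈ sqIdeal br

/-- The subspace `[S, E]`, the span of all `[s, e]` with `s ∈ S`, `e ∈ E`. -/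
def brSE (br : L →ₗ[F] L →ₗ[F] L) (S N : Submodule F L) : Submodule F L :=
  Submodule.span F {z | ∃ s ∈ S, ∃ e, memE br S N e ∧ z = br s e}

/-! Right multiplication `θ = R_b` commutes with the right action of `S`, because `[L, I] = 0`
(already a consequence of the Leibniz identity). Hence `θ` and `θ²` are `S`-module maps `S → I`.
Simplicity of `S` makes `θ` injective on `S` and simplicity of `I` makes it onto `I`, so `θ⁻¹θ²`
is an `S`-endomorphism of `S`; for an eigenvalue `μ` of it, the kernel of `θ² - μθ` is a nonzero
ideal of `S`, whence `θ² = μθ` on `S`. Since `θ` is nilpotent, `μ = 0`. -/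

section

variable {br : L →ₗ[F] L →ₗ[F] L}

lemma br_self_mem_sqIdeal (x : L) : br x x ∈ sqIdeal br :=
  Submodule.subset_span ⟨x, rfl⟩

lemma br_add_br_swap_mem_sqIdeal (x y : L) : br x y + br y x ∈ sqIdeal br := by
  have h : br x y + br y x = br (x + y) (x + y) - br x x - br y y := by
    simp only [map_add, LinearMap.add_apply]
    abel
  rw [h]
  exact sub_mem (sub_mem (br_self_mem_sqIdeal _) (br_self_mem_sqIdeal _)) (br_self_mem_sqIdeal _)

lemma br_eq_zero_of_mem_sqIdeal
    (leib : ∀ x y z : L, br x (br y z) = br (br x y) z - br (br x z) y)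
    (x : L) {i : L} (hi : i ∈ sqIdeal br) : br x i = 0 := by
  induction hi using Submodule.span_induction with
  | mem _ h =>
    obtain ⟨y, rfl⟩ := h
    simpa using leib x y y
  | zero => simp
  | add _ _ _ _ h₁ h₂ => simp [h₁, h₂]
  | smul c _ _ h => simp [h]

lemma br_mem_sqIdeal_of_left_mem
    (leib : ∀ x y z : L, br x (br y z) = br (br x y) z - br (br x z) y)
    {i : L} (hi : i ∈ sqIdeal br) (y : L) : br i y ∈ sqIdeal br := by
  simpa [br_eq_zero_of_mem_sqIdeal leib y hi] using br_add_br_swap_mem_sqIdeal (br := br) i y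

lemma br_br_comm_of_br_mem_sqIdeal
    (leib : ∀ x y z : L, br x (br y z) = br (br x y) z - br (br x z) y)
    {y b : L} (hy : br y b ∈ sqIdeal br) (x : L) : br (br x y) b = br (br x b) y := by
  have h := leib x y b
  rw [br_eq_zero_of_mem_sqIdeal leib x hy] at h
  exact sub_eq_zero.mp h.symm

section Equivariant

variable {S : Submodule F L} {θ : Module.End F L}

lemma isIdealIn_inf_ker (hS : IsLieSubalg br S)
    (hθ : ∀ x ∈ S, ∀ y ∈ S, θ (br x y) = br (θ x) y) :
    IsIdealIn br S (S ⊓ LinearMap.ker θ) := by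
  refine ⟨inf_le_left, fun x ⟨hxS, hxθ⟩ y hyS => ?_⟩
  have hxy : br x y ∈ S ⊓ LinearMap.ker θ :=
    ⟨hS.1 x hxS y hyS, by simp [hθ x hxS y hyS, LinearMap.mem_ker.mp hxθ]⟩
  exact ⟨hxy, hS.2 y hyS x hxS ▸ neg_mem hxy⟩

lemma br_mem_map_of_mem_map (hS : IsLieSubalg br S)
    (hθ : ∀ x ∈ S, ∀ y ∈ S, θ (br x y) = br (θ x) y)
    {z : L} (hz : z ∈ S.map θ) {y : L} (hy : y ∈ S) : br z y ∈ S.map θ := by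
  obtain ⟨x, hx, rfl⟩ := hz
  exact ⟨br x y, hS.1 x hx y hy, hθ x hx y hy⟩

lemma injective_domRestrict_of_exists_ne_zero (hS : IsLieSubalg br S)
    (hSsimple : ∀ K : Submodule F L, IsIdealIn br S K → K = ⊥ ∨ K = S)
    (hθ : ∀ x ∈ S, ∀ y ∈ S, θ (br x y) = br (θ x) y) (hθS : ∃ s ∈ S, θ s ≠ 0) :
    Function.Injective (θ.domRestrict S) := by
  have hker : S ⊓ LinearMap.ker θ = ⊥ := by
    refine (hSsimple _ (isIdealIn_inf_ker hS hθ)).resolve_right fun h => ?_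
    obtain ⟨s, hs, hs0⟩ := hθS
    exact hs0 (h.symm ▸ hs : s ∈ S ⊓ LinearMap.ker θ).2
  refine LinearMap.ker_eq_bot.mp (LinearMap.ker_eq_bot'.mpr fun x hx => ?_)
  have hx' : (x : L) ∈ S ⊓ LinearMap.ker θ := ⟨x.2, hx⟩
  rw [hker] at hx'
  exact Subtype.ext hx'

lemma apply_eq_zero_of_apply_eq_zero (hS : IsLieSubalg br S)
    (hSsimple : ∀ K : Submodule F L, IsIdealIn br S K → K = ⊥ ∨ K = S)
    (hθ : ∀ x ∈ S, ∀ y ∈ S, θ (br x y) = br (θ x) y)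
    {v : L} (hv : v ∈ S) (hv0 : v ≠ 0) (hθv : θ v = 0) {x : L} (hx : x ∈ S) : θ x = 0 := by
  have hker : S ⊓ LinearMap.ker θ = S := by
    refine (hSsimple _ (isIdealIn_inf_ker hS hθ)).resolve_left fun h => hv0 ?_
    have hv' : v ∈ S ⊓ LinearMap.ker θ := ⟨hv, hθv⟩
    rwa [h] at hv'
  exact (hker.symm ▸ hx : x ∈ S ⊓ LinearMap.ker θ).2

end Equivariant

lemma exists_eqOn_smul_of_map_le [IsAlgClosed F] [FiniteDimensional F L] {S : Submodule F L}
    (hS : IsLieSubalg br S)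
    (hSsimple : ∀ K : Submodule F L, IsIdealIn br S K → K = ⊥ ∨ K = S)
    {θ φ : Module.End F L} (hθ : ∀ x ∈ S, ∀ y ∈ S, θ (br x y) = br (θ x) y)
    (hφ : ∀ x ∈ S, ∀ y ∈ S, φ (br x y) = br (φ x) y)
    (hθS : ∃ s ∈ S, θ s ≠ 0) (hφθ : S.map φ ≤ S.map θ) :
    ∃ μ : F, ∀ x ∈ S, φ x = μ • θ x := by
  let e := LinearEquiv.ofInjective _ (injective_domRestrict_of_exists_ne_zero hS hSsimple hθ hθS)
  have hrange : ∀ x : S, φ.domRestrict S x ∈ LinearMap.range (θ.domRestrict S) := fun x => by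
    rw [LinearMap.range_domRestrict]
    exact hφθ ⟨x, x.2, rfl⟩
  -- `f` is `θ⁻¹ ∘ φ` on `S`; an eigenvector of it is a nonzero vector killed by `φ - μ • θ`.
  let f : Module.End F S := e.symm.toLinearMap ∘ₗ (φ.domRestrict S).codRestrict _ hrange
  have : Nontrivial S := by
    obtain ⟨s, hs, hs0⟩ := hθS
    refine nontrivial_of_ne ⟨s, hs⟩ 0 fun h => hs0 ?_
    rw [show s = 0 from congrArg Subtype.val h, map_zero]
  obtain ⟨μ, hμ⟩ := Module.End.exists_eigenvalue f
  obtain ⟨v, hv⟩ := hμ.exists_hasEigenvector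
  have hφv : φ v = μ • θ v := by
    have h := congrArg (fun w => (e w : L)) hv.apply_eq_smul
    simpa [f, e] using h
  refine ⟨μ, fun x hx => sub_eq_zero.mp ?_⟩
  refine apply_eq_zero_of_apply_eq_zero (θ := φ - μ • θ) hS hSsimple (fun x hx y hy => ?_)
    v.2 (fun h => hv.2 (Subtype.ext h)) (by simp [hφv]) hx
  simp only [LinearMap.sub_apply, LinearMap.smul_apply, hφ x hx y hy, hθ x hx y hy, map_sub,
    map_smul]

lemma flip_pow_succ_apply_mem_lcs {N : Submodule F L}
    (hN : IsIdeal br N) {b : L} (hb : b ∈ N) (k : ℕ) (x : L) :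
    (br.flip b ^ (k + 1)) x ∈ lcs br N k := by
  induction k with
  | zero => simpa [lcs] using (hN b hb x).2
  | succ k ih =>
    rw [pow_succ', Module.End.mul_apply]
    exact Submodule.subset_span ⟨_, ih, b, hb, rfl⟩

lemma isNilpotent_flip {N : Submodule F L} (hN : IsIdeal br N)
    (hNnil : IsNilpotentSub br N) {b : L} (hb : b ∈ N) : IsNilpotent (br.flip b) := by
  obtain ⟨n, hn⟩ := hNnil
  refine ⟨n + 1, LinearMap.ext fun x => ?_⟩
  simpa [hn] using flip_pow_succ_apply_mem_lcs hN hb n x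

lemma eq_zero_of_isNilpotent_of_apply_apply_eq_smul {D : Module.End F L} (hD : IsNilpotent D)
    {x : L} (hx : D x ≠ 0) {μ : F} (hμ : D (D x) = μ • D x) : μ = 0 := by
  have hev : D.HasEigenvalue μ :=
    Module.End.hasEigenvalue_of_hasEigenvector ⟨Module.End.mem_eigenspace_iff.mpr hμ, hx⟩
  exact (hev.isNilpotent_of_isNilpotent hD).eq_zero

end

theorem Rb_sq_zero_simple_case_general (L : Type) [AddCommGroup L] [Module ℂ L] [FiniteDimensional ℂ L]
    (br : L →ₗ[ℂ] L →ₗ[ℂ] L)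
    (leib : ∀ x y z : L, br x (br y z) = br (br x y) z - br (br x z) y)
    (S R N : Submodule ℂ L) (hN : IsNilradical br N)
    (hLevi : IsLeviDecomp br S R)
    (hSsimple : (∃ x ∈ S, ∃ y ∈ S, br x y ≠ 0) ∧
      ∀ K : Submodule ℂ L, IsIdealIn br S K → K = ⊥ ∨ K = S)
    (hIsimple : sqIdeal br ≠ ⊥ ∧
      ∀ K : Submodule ℂ L, K ≤ sqIdeal br → (∀ k ∈ K, ∀ s ∈ S, br k s ∈ K) →
        K = ⊥ ∨ K = sqIdeal br)
    (b : L) (hb : b ∈ N) (hbI : ∀ s ∈ S, br s b ∈ sqIdeal br)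
    (hbne : ∃ s ∈ S, br s b ≠ 0) :
    ∀ x ∈ S, br (br x b) b = 0 := by
  set θ := br.flip b
  have hS : IsLieSubalg br S := hLevi.1.1
  have hθ : ∀ x, ∀ y ∈ S, θ (br x y) = br (θ x) y := fun x y hy =>
    br_br_comm_of_br_mem_sqIdeal leib (hbI y hy) x
  have hθθ : ∀ x ∈ S, ∀ y ∈ S, (θ * θ) (br x y) = br ((θ * θ) x) y := fun x _ y hy => by
    simp only [Module.End.mul_apply, hθ _ y hy]
  have himage : S.map θ = sqIdeal br := by
    refine (hIsimple.2 _ (Submodule.map_le_iff_le_comap.mpr hbI)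
      fun k hk s hs => br_mem_map_of_mem_map hS (fun x _ => hθ x) hk hs).resolve_left ?_
    obtain ⟨s, hs, hs0⟩ := hbne
    exact Submodule.ne_bot_iff _ |>.mpr ⟨θ s, ⟨s, hs, rfl⟩, hs0⟩
  obtain ⟨μ, hμ⟩ := exists_eqOn_smul_of_map_le hS hSsimple.2 (fun x _ => hθ x) hθθ hbne <| by
    rw [himage, Submodule.map_le_iff_le_comap]
    exact fun x hx => br_mem_sqIdeal_of_left_mem leib (hbI x hx) b
  obtain ⟨s, hs, hs0⟩ := hbne
  have hμ0 : μ = 0 := eq_zero_of_isNilpotent_of_apply_apply_eq_smul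
    (isNilpotent_flip hN.1 hN.2.1 hb) hs0 (hμ s hs)
  intro x hx
  exact (hμ x hx).trans (by rw [hμ0, zero_smul])

theorem Rb_sq_zero_simple_case (L : Type) [AddCommGroup L] [Module ℂ L] [FiniteDimensional ℂ L]
    (br : L →ₗ[ℂ] L →ₗ[ℂ] L)
    (leib : ∀ x y z : L, br x (br y z) = br (br x y) z - br (br x z) y)
    (S R N : Submodule ℂ L) (hN : IsNilradical br N)
    (hLevi : IsLeviDecomp br S R)
    (hLI : ∀ x : L, ∀ i ∈ sqIdeal br, br x i = 0)
    (hSsimple : (∃ x ∈ S, ∃ y ∈ S, br x y ≠ 0) ∧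
      ∀ K : Submodule ℂ L, IsIdealIn br S K → K = ⊥ ∨ K = S)
    (hIsimple : sqIdeal br ≠ ⊥ ∧
      ∀ K : Submodule ℂ L, K ≤ sqIdeal br → (∀ k ∈ K, ∀ s ∈ S, br k s ∈ K) →
        K = ⊥ ∨ K = sqIdeal br)
    (b : L) (hb : b ∈ N) (hbI : ∀ s ∈ S, br s b ∈ sqIdeal br)
    (hbne : ∃ s ∈ S, br s b ≠ 0) :
    ∀ x ∈ S, br (br x b) b = 0 :=
  Rb_sq_zero_simple_case_general L br leib S R N hN hLevi hSsimple hIsimple b hb hbI hbne
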